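/- arXiv:2110.09282 — 4 statements merged into one kernel-verified Lean document; each statement's English description precedes it below -/
import Mathlib

section
/- Let Z be the 3×3 quaternion skew-symmetric matrix with entries Z₁₂ = 1, Z₁₃ = c, Z₂₃ = b (and Z₂₁ = -1, Z₃₁ = -c, Z₃₂ = -b, zero diagonal). If b̄·c̄ ≠ c̄·b̄, then the only quaternion vector x with Z̄·x = 0 is x = 0; i.e., Z̄ (and hence Z) has trivial kernel. -/
open scoped Quaternion

/-- For `Z = !![0, 1, c; -1, 0, b; -c, -b, 0]` with `b̄·c̄ ≠ c̄·b̄`, the conjugate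
matrix `Z̄` has trivial kernel. -/
theorem three_by_three_skewSymm_conj_trivial_kernel (b c : ℍ[ℝ])
    (h : star b * star c ≠ star c * star b) :
    ∀ x : Fin 3 → ℍ[ℝ],
      ((!![0, 1, c; -1, 0, b; -c, -b, 0] : Matrix (Fin 3) (Fin 3) ℍ[ℝ]).map star).mulVec x = 0 →
      x = 0 := by
  intro x hx
  have h0 := congrFun hx 0
  have h1 := congrFun hx 1
  have h2 := congrFun hx 2
  simp [Matrix.mulVec, dotProduct, Fin.sum_univ_three, Matrix.map_apply] at h0 h1 h2
  have e0 : x 1 = -(star c * x 2) := by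
    have := eq_neg_of_add_eq_zero_left h0; simpa using this
  have e1 : x 0 = star b * x 2 := by
    have := eq_neg_of_add_eq_zero_left h1; simpa using this
  rw [e0, e1] at h2
  have key : (star b * star c - star c * star b) * x 2 = 0 := by
    have h2' : -(star c * (star b * x 2)) + star b * (star c * x 2) = 0 := by
      simpa using h2
    calc (star b * star c - star c * star b) * x 2
        = -(star c * (star b * x 2)) + star b * (star c * x 2) := by
          noncomm_ring
      _ = 0 := h2'
  have hx2 : x 2 = 0 := by
    rcases mul_eq_zero.mp key with hz | hz
    · exact absurd (sub_eq_zero.mp hz) h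
    · exact hz
  funext i
  fin_cases i <;> simp [e0, e1, hx2]
end

section
/- Let Z be the 3×3 quaternion skew-symmetric matrix with Z₁₂ = 1, Z₁₃ = c, Z₂₃ = b, Z₂₁ = -1, Z₃₁ = -c, Z₃₂ = -b, and zero diagonal, where b̄·c̄ ≠ c̄·b̄. Then W = Z·Z* is positive definite: for every nonzero quaternion vector x ∈ ℍ³, x* W x > 0. -/
/-!
`x* Z Z* x = (Z* x)* (Z* x)` is the sum of the quaternion norms of the entries of `Z* x`, so it
suffices that `Z*` is injective. Up to sign `Z*` is the same kind of matrix with parameters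
`b̄, c̄`, and its kernel equations give `x₁ = b̄ x₃`, `x₂ = -c̄ x₃`, hence `(b̄ c̄ - c̄ b̄) x₃ = 0`.
-/

open scoped Quaternion
open Matrix

theorem Matrix.star_dotProduct_mul_conjTranspose_mulVec {m n α : Type*} [Fintype m] [Fintype n]
    [NonUnitalSemiring α] [StarRing α] (A : Matrix m n α) (x : m → α) :
    star x ⬝ᵥ (A * Aᴴ) *ᵥ x = star (Aᴴ *ᵥ x) ⬝ᵥ Aᴴ *ᵥ x := by
  rw [← mulVec_mulVec, dotProduct_mulVec, star_mulVec, conjTranspose_conjTranspose]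

theorem Quaternion.star_dotProduct_self {R ι : Type*} [CommRing R] [Fintype ι] (v : ι → ℍ[R]) :
    star v ⬝ᵥ v = ((∑ i, normSq (v i) : R) : ℍ[R]) := by
  simp only [dotProduct, Pi.star_apply, star_mul_self]
  exact (map_sum (algebraMap R ℍ[R]) _ _).symm

theorem Quaternion.sum_normSq_pos {R ι : Type*} [CommRing R] [LinearOrder R] [IsStrictOrderedRing R]
    [Fintype ι] {v : ι → ℍ[R]} (hv : v ≠ 0) : 0 < ∑ i, normSq (v i) := by
  obtain ⟨i, hi⟩ := Function.ne_iff.mp hv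
  exact Finset.sum_pos' (fun _ _ => normSq_nonneg)
    ⟨i, Finset.mem_univ i, normSq_nonneg.lt_of_ne (normSq_ne_zero.mpr hi).symm⟩

section SkewSymmetric

variable {α : Type*} [Ring α]

theorem conjTranspose_skewSymm_three [StarRing α] (b c : α) :
    (!![0, 1, c; -1, 0, b; -c, -b, 0] : Matrix (Fin 3) (Fin 3) α)ᴴ =
      -!![0, 1, star c; -1, 0, star b; -star c, -star b, 0] := by
  ext i j
  fin_cases i <;> fin_cases j <;> simp

theorem eq_zero_of_skewSymm_three_mulVec_eq_zero [NoZeroDivisors α] {p q : α}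
    (hpq : p * q ≠ q * p) {x : Fin 3 → α}
    (hx : (!![0, 1, q; -1, 0, p; -q, -p, 0] : Matrix (Fin 3) (Fin 3) α) *ᵥ x = 0) : x = 0 := by
  have h0 := congrFun hx 0
  have h1 := congrFun hx 1
  have h2 := congrFun hx 2
  simp only [mulVec, dotProduct, Fin.sum_univ_three, of_apply, cons_val', cons_val_zero,
    cons_val_one, cons_val, cons_val_fin_one, Pi.zero_apply, zero_mul, one_mul, neg_mul, zero_add,
    add_zero] at h0 h1 h2
  have hx0 : x 0 = p * x 2 := by linear_combination (norm := noncomm_ring) -h1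
  have hx1 : x 1 = -(q * x 2) := by linear_combination (norm := noncomm_ring) h0
  have hx2 : x 2 = 0 := by
    have hcomm : (p * q - q * p) * x 2 = 0 := by
      rw [hx0, hx1] at h2
      linear_combination (norm := noncomm_ring) h2
    exact (mul_eq_zero.mp hcomm).resolve_left (sub_ne_zero.mpr hpq)
  ext i
  fin_cases i <;> simp [hx0, hx1, hx2]

end SkewSymmetric

/-- For `Z = !![0, 1, c; -1, 0, b; -c, -b, 0]` with `b̄·c̄ ≠ c̄·b̄`, the matrix
`W = Z·Z*` is positive definite: `x* W x > 0` for all nonzero `x`. -/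
theorem three_by_three_skewSymm_mul_conjTranspose_posDef (b c : ℍ[ℝ])
    (h : star b * star c ≠ star c * star b) :
    ∀ x : Fin 3 → ℍ[ℝ], x ≠ 0 → ∃ r : ℝ, 0 < r ∧
      dotProduct (star x)
        (((!![0, 1, c; -1, 0, b; -c, -b, 0] : Matrix (Fin 3) (Fin 3) ℍ[ℝ]) *
          (!![0, 1, c; -1, 0, b; -c, -b, 0]).conjTranspose).mulVec x) = (r : ℍ[ℝ]) := by
  intro x hx
  set y := (!![0, 1, c; -1, 0, b; -c, -b, 0] : Matrix (Fin 3) (Fin 3) ℍ[ℝ])ᴴ *ᵥ x with hy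
  refine ⟨∑ i, Quaternion.normSq (y i), Quaternion.sum_normSq_pos ?_, ?_⟩
  · rw [hy, conjTranspose_skewSymm_three, neg_mulVec, neg_ne_zero]
    exact mt (eq_zero_of_skewSymm_three_mulVec_eq_zero h) hx
  · rw [star_dotProduct_mul_conjTranspose_mulVec, Quaternion.star_dotProduct_self]
end

section
/- Let Z be the 3×3 quaternion skew-symmetric matrix with Z₁₂ = 1, Z₁₃ = c, Z₂₃ = b (skew-symmetric completion), where b̄·c̄ = c̄·b̄. Then W = Z·Z* has 0 as a right eigenvalue and 1 + |b|² + |c|² as a real right eigenvalue of multiplicity two. -/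
open scoped Quaternion
open Matrix

/-!
Commuting `b` and `c` also commute with each other's conjugates, and then
`W = Z Zᴴ = λ • 1 - x xᴴ` with `x = (b̄, -c̄, 1)` and `λ = 1 + |b|² + |c|² = xᴴ x`.
Hence `W x = 0`, while `W` acts as `λ` on the orthogonal complement of `x`, which contains
the orthogonal pair `(1, 0, -b)` and `(b̄ c, 1 + |b|², c)`.
-/

theorem QuaternionAlgebra.Commute.star_right {R : Type*} [CommRing R] {c₁ c₂ c₃ : R}
    {a b : ℍ[R,c₁,c₂,c₃]} (h : Commute a b) : Commute a (star b) := by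
  rw [b.star_eq_two_re_sub]
  exact (coe_commute _ a).symm.sub_right h

namespace Matrix

variable {𝕜 R n : Type*} [CommSemiring 𝕜] [Ring R] [Algebra 𝕜 R] [Fintype n] [DecidableEq n]

theorem smul_one_sub_vecMulVec_mulVec_of_dotProduct_eq_zero (μ : 𝕜) {x y u : n → R}
    (h : y ⬝ᵥ u = 0) : (μ • (1 : Matrix n n R) - vecMulVec x y) *ᵥ u = μ • u := by
  rw [sub_mulVec, vecMulVec_mulVec, h, MulOpposite.op_zero, zero_smul, sub_zero, smul_mulVec,
    one_mulVec]

theorem smul_one_sub_vecMulVec_mulVec_self (μ : 𝕜) {x y : n → R}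
    (h : y ⬝ᵥ x = algebraMap 𝕜 R μ) : (μ • (1 : Matrix n n R) - vecMulVec x y) *ᵥ x = 0 := by
  rw [sub_mulVec, vecMulVec_mulVec, h, smul_mulVec, one_mulVec, sub_eq_zero]
  ext i
  simp [Algebra.smul_def, Algebra.commutes]

end Matrix

namespace Quaternion

theorem skewSymm_mul_conjTranspose_eq {b c : ℍ[ℝ]} (hbc : Commute b c) :
    (!![0, 1, c; -1, 0, b; -c, -b, 0] : Matrix (Fin 3) (Fin 3) ℍ[ℝ]) *
        (!![0, 1, c; -1, 0, b; -c, -b, 0]).conjTranspose =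
      (1 + normSq b + normSq c : ℝ) • 1 -
        vecMulVec ![star b, -star c, 1] (star ![star b, -star c, 1]) := by
  have hbc' : Commute b (star c) := QuaternionAlgebra.Commute.star_right hbc
  have hcb' : Commute c (star b) := QuaternionAlgebra.Commute.star_right hbc.symm
  refine Matrix.ext fun i j => ?_
  simp only [mul_apply, Fin.sum_univ_three, conjTranspose_apply, Matrix.sub_apply,
    Matrix.smul_apply, one_apply, vecMulVec_apply, Pi.star_apply]
  fin_cases i <;> fin_cases j <;>
    simp [self_mul_star, star_mul_self, hbc'.eq, hcb'.eq, Algebra.smul_def]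
  all_goals abel

end Quaternion

/-- For `Z = !![0, 1, c; -1, 0, b; -c, -b, 0]` with `b̄·c̄ = c̄·b̄`, the matrix
`W = Z·Z*` has `0` as a right eigenvalue and `1 + |b|² + |c|²` as a real right
eigenvalue of multiplicity two (witnessed by two orthogonal eigenvectors). -/
theorem three_by_three_skewSymm_commuting_eigenvalues (b c : ℍ[ℝ])
    (h : star b * star c = star c * star b) :
    ∃ W : Matrix (Fin 3) (Fin 3) ℍ[ℝ],
      W = (!![0, 1, c; -1, 0, b; -c, -b, 0] : Matrix (Fin 3) (Fin 3) ℍ[ℝ]) *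
          (!![0, 1, c; -1, 0, b; -c, -b, 0]).conjTranspose ∧
      (∃ x : Fin 3 → ℍ[ℝ], x ≠ 0 ∧ W.mulVec x = 0) ∧
      (∃ u v : Fin 3 → ℍ[ℝ], u ≠ 0 ∧ v ≠ 0 ∧ dotProduct (star u) v = 0 ∧
        W.mulVec u = (1 + Quaternion.normSq b + Quaternion.normSq c : ℝ) • u ∧
        W.mulVec v = (1 + Quaternion.normSq b + Quaternion.normSq c : ℝ) • v) := by
  have hbc : Commute b c := by simpa using Commute.star_star h
  refine ⟨_, rfl, ?_⟩
  rw [Quaternion.skewSymm_mul_conjTranspose_eq hbc]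
  have hx : star ![star b, -star c, 1] ⬝ᵥ ![star b, -star c, 1] =
      algebraMap ℝ ℍ[ℝ] (1 + Quaternion.normSq b + Quaternion.normSq c) := by
    simp only [dotProduct, Fin.sum_univ_three, Pi.star_apply, cons_val_zero, cons_val_one,
      cons_val_two, tail_cons, head_cons, star_star, star_neg, neg_mul_neg, star_one, mul_one, Quaternion.self_mul_star,
      Quaternion.algebraMap_def, Quaternion.coe_add, Quaternion.coe_one]
    abel
  refine ⟨⟨_, fun h0 => by simpa using congrFun h0 2, smul_one_sub_vecMulVec_mulVec_self _ hx⟩,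
    ![1, 0, -b], ![star b * c, ((1 + Quaternion.normSq b : ℝ) : ℍ[ℝ]), c],
    fun h0 => by simpa using congrFun h0 0, fun h0 => ?_, ?_,
    smul_one_sub_vecMulVec_mulVec_of_dotProduct_eq_zero _ ?_,
    smul_one_sub_vecMulVec_mulVec_of_dotProduct_eq_zero _ ?_⟩
  · have h1 : (1 + Quaternion.normSq b : ℝ) = 0 := Quaternion.coe_injective (congrFun h0 1)
    linarith [Quaternion.normSq_nonneg (a := b)]
  all_goals simp [dotProduct, Fin.sum_univ_three, mul_add, ← mul_assoc,
    Quaternion.self_mul_star, Quaternion.coe_commutes]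
end

section
/- Suppose Z is a 3×3 quaternion skew-symmetric matrix with Z₁₂ = 1, Z₁₃ = c, Z₂₃ = b (skew-symmetric completion), where b̄·c̄ ≠ c̄·b̄. If Z is invertible, then Z⁻¹ is not skew-symmetric, i.e., (Z⁻¹)ᵀ ≠ -Z⁻¹. -/
open scoped Quaternion

/-- For `Z = !![0, 1, c; -1, 0, b; -c, -b, 0]` with `b̄·c̄ ≠ c̄·b̄`, if `Z` is
invertible then its inverse is not skew-symmetric. -/
theorem three_by_three_skewSymm_inverse_not_skewSymm (b c : ℍ[ℝ])
    (h : star b * star c ≠ star c * star b) :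
    ∀ B : Matrix (Fin 3) (Fin 3) ℍ[ℝ],
      (!![0, 1, c; -1, 0, b; -c, -b, 0] : Matrix (Fin 3) (Fin 3) ℍ[ℝ]) * B = 1 →
      B * (!![0, 1, c; -1, 0, b; -c, -b, 0] : Matrix (Fin 3) (Fin 3) ℍ[ℝ]) = 1 →
      B.transpose ≠ -B := by
  intro B hZB _ hT
  have skew : ∀ i j : Fin 3, B j i = -B i j := fun i j => by
    have := congrFun (congrFun hT i) j
    simpa [Matrix.transpose_apply, Matrix.neg_apply] using this
  have h22 : B 2 2 = 0 := by
    have h' := eq_neg_iff_add_eq_zero.mp (skew 2 2)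
    have h2 : (2:ℝ) • B 2 2 = 0 := by rw [two_smul]; exact h'
    exact (smul_eq_zero.mp h2).resolve_left two_ne_zero
  have e02 : B 1 2 = 0 := by
    have := congrFun (congrFun hZB 0) 2
    simp [Matrix.mul_apply, Fin.sum_univ_three, Matrix.one_apply, h22] at this
    exact this
  have e11' := congrFun (congrFun hZB 1) 1
  simp [Matrix.mul_apply, Fin.sum_univ_three, Matrix.one_apply] at e11'
  have e00 := congrFun (congrFun hZB 0) 0
  simp [Matrix.mul_apply, Fin.sum_univ_three, Matrix.one_apply] at e00
  have e22 := congrFun (congrFun hZB 2) 2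
  simp [Matrix.mul_apply, Fin.sum_univ_three, Matrix.one_apply] at e22
  rw [skew 1 2, e02, neg_zero, mul_zero, add_zero] at e11'
  rw [skew 0 1, skew 0 2] at e00
  rw [e02, mul_zero, neg_zero, add_zero] at e22
  have hB01 : B 0 1 = -1 := by linear_combination (norm := noncomm_ring) -e11'
  rw [hB01] at e00
  have hc : c * B 0 2 = 0 := by linear_combination (norm := noncomm_ring) -e00
  rw [hc, neg_zero] at e22
  exact one_ne_zero e22.symm
end
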